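/- Any Tarskian system execution satisfying the Lazy Set axioms A0–A2 is linearizable: there exists a linear order <₀ on the events extending the precedence relation < such that <₀ together with γ satisfies FS0, FS1, and FS2. -/

import Mathlib

/-- Event type: Add, Rem, or Contains. -/
inductive EType | add | rem | cnt
deriving DecidableEq

/-- Status of an event: 0, 1, or f (failed). -/
inductive Status | s0 | s1 | sf
deriving DecidableEq

open EType Status

/-- A Tarskian system execution satisfying the Lazy Set axioms A0–A2.
Events are typed Add/Rem/Cnt; Add and Rem events are actions (with
Begin(E) = End(E) = E) and the actions are linearly ordered by the temporal
precedence relation `lt`; Cnt events are high-level with Begin(E) < End(E);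
`γ` is defined on the Op¹ events and satisfies axioms A1 and A2. -/
structure LazySys where
  E : Type
  lt : E → E → Prop
  typ : E → EType
  χ : E → Status
  kval : E → ℕ
  Begin : E → E
  End' : E → E
  γ : E → E
  action : E → Prop
  lt_irrefl : ∀ e, ¬ lt e e
  lt_trans : ∀ a b c, lt a b → lt b c → lt a c
  act_lin : ∀ a b, action a → action b → a ≠ b → lt a b ∨ lt b a
  addRem_action : ∀ e, typ e ≠ EType.cnt →
    action e ∧ Begin e = e ∧ End' e = e
  begin_end_action : ∀ e, action (Begin e) ∧ action (End' e)
  cnt_interval : ∀ e, typ e = EType.cnt → lt (Begin e) (End' e)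
  lt_iff : ∀ a b, lt a b ↔ lt (End' a) (Begin b)
  A1 : ∀ A, χ A = Status.s1 →
    typ (γ A) = EType.add ∧ χ (γ A) = Status.s0 ∧ kval (γ A) = kval A ∧
    lt (γ A) (End' A) ∧
    ¬ ∃ R, typ R = EType.rem ∧ χ R = Status.s1 ∧ γ R = γ A ∧
      lt (γ A) R ∧ lt R A
  A2 : ∀ A B, typ A = EType.add → χ A = Status.s0 → χ B = Status.s0 →
    lt A B → kval A = kval B →
    ∃ R, typ R = EType.rem ∧ χ R = Status.s1 ∧ γ R = A ∧ lt R (End' B)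

/-- The auxiliary relation ⇒ used in the linearization proof. -/
def LazySys.arrow (S : LazySys) (X Y : S.E) : Prop :=
  (S.typ Y = EType.cnt ∧ S.χ Y = Status.s1 ∧ X = S.γ Y) ∨
  (S.typ X = EType.cnt ∧ S.χ X = Status.s1 ∧
    S.typ Y = EType.rem ∧ S.χ Y = Status.s1 ∧ S.γ Y = S.γ X) ∨
  (S.typ X = EType.rem ∧ S.χ X = Status.s1 ∧
    S.typ Y = EType.cnt ∧ S.χ Y = Status.s0 ∧
    S.kval X = S.kval Y ∧ ¬ S.lt Y X ∧ S.lt (S.γ X) Y) ∨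
  (S.typ X = EType.cnt ∧ S.χ X = Status.s0 ∧
    S.typ Y = EType.add ∧ S.χ Y = Status.s0 ∧
    S.kval X = S.kval Y ∧ ¬ S.lt Y X)

/-!
Every event gets an integer timestamp. An Add or Rem event sits at four times its rank (the number
of events not after it, finite by Lamport's property); a Contains event sits inside the window
spanned by its Begin and End actions, just after the latest event that `⇒` forces it to follow.
Timestamps increase along both `<` and `⇒`; the only delicate case is `⇒` from a `Cnt⁰` to an
`Add⁰`, where A1 and A2 show that every remove the contains has to follow precedes that add.
Ordering events by timestamp, ties broken arbitrarily, gives a linear order extending `<` and `⇒`,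
and any order extending both satisfies FS1 and FS2.
-/

namespace LazySys

variable (S : LazySys)

def LamportFinite : Prop := ∀ x : S.E, {y : S.E | ¬ S.lt x y}.Finite

noncomputable def rank (x : S.E) : ℕ := {y : S.E | ¬ S.lt x y}.ncard

/-- `W` is a `Rem¹` of the key of `b` which `b` has to follow if `b` is a `Cnt⁰`
(the third clause of `arrow`). -/
def Blocks (W b : S.E) : Prop :=
  S.typ W = rem ∧ S.χ W = s1 ∧ S.kval W = S.kval b ∧ ¬ S.lt b W ∧ S.lt (S.γ W) b

noncomputable def barrier (b : S.E) : ℕ := sSup (S.rank '' {W | S.Blocks W b})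

noncomputable def lowerRank (e : S.E) : ℕ :=
  match S.χ e with
  | s1 => S.rank (S.γ e)
  | s0 => S.barrier e
  | sf => 0

/-- The window of an event `e` is `(4 * rank (Begin e) - 2, 4 * rank (End e) + 2)`; the `- 1` puts
a Contains event before the action that begins it. -/
noncomputable def ts (e : S.E) : ℤ :=
  if S.typ e = cnt then max (4 * S.rank (S.Begin e) - 1) (4 * S.lowerRank e + 1)
  else 4 * S.rank e

variable {S}

theorem lt_asymm {a b : S.E} (h : S.lt a b) : ¬ S.lt b a :=
  fun h' => S.lt_irrefl a (S.lt_trans _ _ _ h h')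

theorem action_of_ne_cnt {e : S.E} (h : S.typ e ≠ cnt) : S.action e :=
  (S.addRem_action e h).1

theorem begin_eq_self {e : S.E} (h : S.typ e ≠ cnt) : S.Begin e = e :=
  (S.addRem_action e h).2.1

theorem end_eq_self {e : S.E} (h : S.typ e ≠ cnt) : S.End' e = e :=
  (S.addRem_action e h).2.2

theorem lt_trichotomy_of_action {a b : S.E} (ha : S.action a) (hb : S.action b) :
    S.lt a b ∨ a = b ∨ S.lt b a := by
  by_cases hab : a = b
  · exact Or.inr (Or.inl hab)
  · exact (S.act_lin a b ha hb hab).imp_right Or.inr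

theorem lt_begin_iff {X Y : S.E} (hY : S.typ Y ≠ cnt) : S.lt Y (S.Begin X) ↔ S.lt Y X := by
  rw [S.lt_iff Y X, end_eq_self hY]

theorem end_lt_iff {b W : S.E} (hW : S.typ W ≠ cnt) : S.lt (S.End' b) W ↔ S.lt b W := by
  rw [S.lt_iff b W, begin_eq_self hW]

theorem γ_lt_of_rem {R : S.E} (hRr : S.typ R = rem) (hR1 : S.χ R = s1) : S.lt (S.γ R) R := by
  simpa [end_eq_self (e := R) (by simp [hRr])] using (S.A1 R hR1).2.2.2.1

theorem rank_pos (hfin : S.LamportFinite) (x : S.E) : 0 < S.rank x :=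
  (Set.ncard_pos (hfin x)).2 ⟨x, S.lt_irrefl x⟩

theorem rank_lt_rank (hfin : S.LamportFinite) {x y : S.E} (h : S.lt x y) :
    S.rank x < S.rank y :=
  Set.ncard_lt_ncard
    ⟨fun _ hz hyz => hz (S.lt_trans _ _ _ h hyz), fun hsub => hsub (S.lt_irrefl y) h⟩ (hfin y)

theorem rank_le_rank_of_not_lt (hfin : S.LamportFinite) {a b : S.E} (ha : S.action a)
    (hb : S.action b) (h : ¬ S.lt a b) : S.rank b ≤ S.rank a := by
  rcases lt_trichotomy_of_action ha hb with hab | rfl | hba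
  · exact absurd hab h
  · rfl
  · exact (rank_lt_rank hfin hba).le

theorem rank_begin_le_rank_end (hfin : S.LamportFinite) (e : S.E) :
    S.rank (S.Begin e) ≤ S.rank (S.End' e) := by
  by_cases h : S.typ e = cnt
  · exact (rank_lt_rank hfin (S.cnt_interval e h)).le
  · rw [begin_eq_self h, end_eq_self h]

theorem rank_begin_le_of_not_lt (hfin : S.LamportFinite) {X Y : S.E} (hY : S.typ Y ≠ cnt)
    (h : ¬ S.lt Y X) : S.rank (S.Begin X) ≤ S.rank Y :=
  rank_le_rank_of_not_lt hfin (action_of_ne_cnt hY) (S.begin_end_action X).1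
    (mt (lt_begin_iff hY).1 h)

theorem rank_le_end_of_not_lt (hfin : S.LamportFinite) {b W : S.E} (hW : S.typ W ≠ cnt)
    (h : ¬ S.lt b W) : S.rank W ≤ S.rank (S.End' b) :=
  rank_le_rank_of_not_lt hfin (S.begin_end_action b).2 (action_of_ne_cnt hW)
    (mt (end_lt_iff hW).1 h)

theorem Blocks.typ_ne_cnt {W b : S.E} (h : S.Blocks W b) : S.typ W ≠ cnt := by
  simp [h.1]

/-- If `Z` came before `W`, it would come after `γ W` (as `Z` does not precede `b`), and A2 would
produce a remove of `γ W` between `Z` and `W`, contradicting A1 for `W`. -/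
theorem Blocks.lt_of_add {W b Z : S.E} (hWb : S.Blocks W b)
    (hZa : S.typ Z = add) (hZ0 : S.χ Z = s0) (hk : S.kval b = S.kval Z)
    (hZb : ¬ S.lt Z b) : S.lt W Z := by
  have hW := action_of_ne_cnt hWb.typ_ne_cnt
  obtain ⟨hWr, hW1, hWk, -, hγWb⟩ := hWb
  obtain ⟨hγWa, hγW0, hγWk, -, hnone⟩ := S.A1 W hW1
  have hZ : S.typ Z ≠ cnt := by simp [hZa]
  have hγW : S.action (S.γ W) := action_of_ne_cnt (by simp [hγWa])
  rcases lt_trichotomy_of_action hW (action_of_ne_cnt hZ) with hWZ | rfl | hZW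
  · exact hWZ
  · simp [hWr] at hZa
  exfalso
  rcases lt_trichotomy_of_action (action_of_ne_cnt hZ) hγW with hZγ | rfl | hγZ
  · exact hZb (S.lt_trans _ _ _ hZγ hγWb)
  · exact hZb hγWb
  obtain ⟨R, hRr, hR1, hRγ, hRZ⟩ := S.A2 _ Z hγWa hγW0 hZ0 hγZ (by rw [hγWk, hWk, hk])
  have hγR := γ_lt_of_rem hRr hR1
  rw [hRγ] at hγR
  rw [end_eq_self hZ] at hRZ
  exact hnone ⟨R, hRr, hR1, hRγ, hγR, S.lt_trans _ _ _ hRZ hZW⟩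

theorem Blocks.rank_le_rank_end (hfin : S.LamportFinite) {W b : S.E} (h : S.Blocks W b) :
    S.rank W ≤ S.rank (S.End' b) :=
  rank_le_end_of_not_lt hfin h.typ_ne_cnt h.2.2.2.1

theorem rank_le_barrier (hfin : S.LamportFinite) {W b : S.E} (h : S.Blocks W b) :
    S.rank W ≤ S.barrier b := by
  refine le_csSup ⟨S.rank (S.End' b), ?_⟩ ⟨W, h, rfl⟩
  rintro _ ⟨V, hV, rfl⟩
  exact hV.rank_le_rank_end hfin

theorem barrier_le_rank_end (hfin : S.LamportFinite) (b : S.E) :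
    S.barrier b ≤ S.rank (S.End' b) := by
  refine csSup_le' ?_
  rintro _ ⟨V, hV, rfl⟩
  exact hV.rank_le_rank_end hfin

theorem barrier_lt {b : S.E} {n : ℕ} (hn : 0 < n) (h : ∀ W, S.Blocks W b → S.rank W < n) :
    S.barrier b < n := by
  refine Nat.lt_of_le_pred hn (csSup_le' ?_)
  rintro _ ⟨W, hW, rfl⟩
  exact Nat.le_pred_of_lt (h W hW)

theorem lowerRank_le_rank_end (hfin : S.LamportFinite) (e : S.E) :
    S.lowerRank e ≤ S.rank (S.End' e) := by
  unfold lowerRank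
  split
  · exact (rank_lt_rank hfin (S.A1 e ‹_›).2.2.2.1).le
  · exact barrier_le_rank_end hfin e
  · exact Nat.zero_le _

theorem lowerRank_of_s1 {e : S.E} (h : S.χ e = s1) : S.lowerRank e = S.rank (S.γ e) := by
  simp [lowerRank, h]

theorem lowerRank_of_s0 {e : S.E} (h : S.χ e = s0) : S.lowerRank e = S.barrier e := by
  simp [lowerRank, h]

theorem ts_of_ne_cnt {e : S.E} (h : S.typ e ≠ cnt) : S.ts e = 4 * S.rank e := if_neg h

theorem ts_of_cnt {e : S.E} (h : S.typ e = cnt) :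
    S.ts e = max (4 * (S.rank (S.Begin e) : ℤ) - 1) (4 * S.lowerRank e + 1) := if_pos h

theorem ts_mem_window (hfin : S.LamportFinite) (e : S.E) :
    4 * (S.rank (S.Begin e) : ℤ) - 2 < S.ts e ∧ S.ts e < 4 * S.rank (S.End' e) + 2 := by
  by_cases h : S.typ e = cnt
  · have := lowerRank_le_rank_end hfin e
    have := rank_begin_le_rank_end hfin e
    rw [ts_of_cnt h]
    omega
  · rw [ts_of_ne_cnt h, begin_eq_self h, end_eq_self h]
    omega

theorem ts_lt_ts_of_lt (hfin : S.LamportFinite) {a b : S.E} (h : S.lt a b) :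
    S.ts a < S.ts b := by
  have := rank_lt_rank hfin ((S.lt_iff a b).1 h)
  have := ts_mem_window hfin a
  have := ts_mem_window hfin b
  omega

theorem ts_lt_ts_of_arrow (hfin : S.LamportFinite) {X Y : S.E} (h : S.arrow X Y) :
    S.ts X < S.ts Y := by
  rcases h with ⟨hYc, hY1, rfl⟩ | ⟨hXc, hX1, hYr, hY1, hγ⟩ |
    ⟨hXr, hX1, hYc, hY0, hk, hYX, hγXY⟩ | ⟨hXc, hX0, hYa, hY0, hk, hYX⟩
  · rw [ts_of_ne_cnt (by simp [(S.A1 Y hY1).1]), ts_of_cnt hYc, lowerRank_of_s1 hY1]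
    omega
  · have hY : S.typ Y ≠ cnt := by simp [hYr]
    have hγY := γ_lt_of_rem hYr hY1
    rw [hγ] at hγY
    have hYX : ¬ S.lt Y X := fun hYX => (S.A1 X hX1).2.2.2.2 ⟨Y, hYr, hY1, hγ, hγY, hYX⟩
    have := rank_begin_le_of_not_lt hfin hY hYX
    have := rank_lt_rank hfin hγY
    rw [ts_of_cnt hXc, ts_of_ne_cnt hY, lowerRank_of_s1 hX1]
    omega
  · have := rank_le_barrier hfin ⟨hXr, hX1, hk, hYX, hγXY⟩
    rw [ts_of_ne_cnt (by simp [hXr]), ts_of_cnt hYc, lowerRank_of_s0 hY0]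
    omega
  · have hY : S.typ Y ≠ cnt := by simp [hYa]
    have := rank_begin_le_of_not_lt hfin hY hYX
    have := barrier_lt (rank_pos hfin Y) fun W hW =>
      rank_lt_rank hfin (hW.lt_of_add hYa hY0 hk hYX)
    rw [ts_of_cnt hXc, ts_of_ne_cnt hY, lowerRank_of_s0 hX0]
    omega

section Extension

variable {r : S.E → S.E → Prop} [Std.Asymm r]
  (hlt : ∀ a b, S.lt a b → r a b) (harrow : ∀ a b, S.arrow a b → r a b)
include hlt

theorem lt_of_rel_of_action {a b : S.E} (ha : S.action a) (hb : S.action b) (h : r a b) :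
    S.lt a b := by
  rcases lt_trichotomy_of_action ha hb with hab | rfl | hba
  · exact hab
  · exact absurd h (irrefl a)
  · exact absurd (hlt b a hba) (asymm h)

include harrow

theorem fs1 {a : S.E} (ha : S.χ a = s1) :
    r (S.γ a) a ∧ S.typ (S.γ a) = add ∧ S.χ (S.γ a) = s0 ∧
      S.kval (S.γ a) = S.kval a ∧
      ¬ ∃ x, S.typ x = rem ∧ S.χ x = s1 ∧ S.γ x = S.γ a ∧ r (S.γ a) x ∧ r x a := by
  obtain ⟨hγa, hγ0, hγk, hγEnd, hnone⟩ := S.A1 a ha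
  refine ⟨?_, hγa, hγ0, hγk, ?_⟩
  · by_cases hc : S.typ a = cnt
    · exact harrow _ _ (Or.inl ⟨hc, ha, rfl⟩)
    · exact hlt _ _ (by rwa [end_eq_self hc] at hγEnd)
  rintro ⟨x, hxr, hx1, hxγ, hγx, hxa⟩
  by_cases hc : S.typ a = cnt
  · exact asymm hxa (harrow _ _ (Or.inr (Or.inl ⟨hc, ha, hxr, hx1, hxγ⟩)))
  · have hx := action_of_ne_cnt (e := x) (by simp [hxr])
    exact hnone ⟨x, hxr, hx1, hxγ,
      lt_of_rel_of_action hlt (action_of_ne_cnt (by simp [hγa])) hx hγx,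
      lt_of_rel_of_action hlt hx (action_of_ne_cnt hc) hxa⟩

theorem fs2 {a b : S.E} (hab : r a b) (ha : S.typ a = add) (ha0 : S.χ a = s0)
    (hb0 : S.χ b = s0) (hk : S.kval a = S.kval b) :
    ∃ x, r a x ∧ r x b ∧ S.typ x = rem ∧ S.χ x = s1 ∧ S.γ x = a := by
  have hlt_ab : S.lt a b := by
    by_contra hnab
    by_cases hc : S.typ b = cnt
    · exact asymm hab (harrow _ _ (Or.inr (Or.inr (Or.inr ⟨hc, hb0, ha, ha0, hk.symm, hnab⟩))))
    · exact hnab (lt_of_rel_of_action hlt (action_of_ne_cnt (by simp [ha]))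
        (action_of_ne_cnt hc) hab)
  obtain ⟨x, hxr, hx1, hxγ, hxb⟩ := S.A2 a b ha ha0 hb0 hlt_ab hk
  have hx : S.typ x ≠ cnt := by simp [hxr]
  have hax := γ_lt_of_rem hxr hx1
  rw [hxγ] at hax
  refine ⟨x, hlt _ _ hax, ?_, hxr, hx1, hxγ⟩
  by_cases hc : S.typ b = cnt
  · have hkx : S.kval x = S.kval b := by rw [← (S.A1 x hx1).2.2.1, hxγ, hk]
    have hbx : ¬ S.lt b x := fun hbx => lt_asymm hxb ((end_lt_iff hx).2 hbx)
    exact harrow _ _ (Or.inr (Or.inr (Or.inl ⟨hxr, hx1, hc, hb0, hkx, hbx, hxγ ▸ hlt_ab⟩)))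
  · exact hlt _ _ (by rwa [end_eq_self hc] at hxb)

end Extension

end LazySys

/-- Any Tarskian system execution satisfying the Lazy Set axioms
A0–A2 (with Lamport's finiteness property) is linearizable: there exists a
linear (strict total) order <₀ on the events extending the precedence
relation < such that <₀ together with γ satisfies FS0, FS1, and FS2. -/
theorem stmt11 (S : LazySys)
    (hfin : ∀ x : S.E, {y : S.E | ¬ S.lt x y}.Finite) :
    ∃ lt0 : S.E → S.E → Prop,
      -- <₀ extends <
      (∀ a b, S.lt a b → lt0 a b) ∧
      -- FS0: <₀ is a (strict) linear ordering of the events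
      (∀ a, ¬ lt0 a a) ∧
      (∀ a b c, lt0 a b → lt0 b c → lt0 a c) ∧
      (∀ a b : S.E, a ≠ b → lt0 a b ∨ lt0 b a) ∧
      -- FS1
      (∀ a, S.χ a = s1 →
        lt0 (S.γ a) a ∧ S.typ (S.γ a) = add ∧ S.χ (S.γ a) = s0 ∧
        S.kval (S.γ a) = S.kval a ∧
        ¬ ∃ r, S.typ r = rem ∧ S.χ r = s1 ∧ S.γ r = S.γ a ∧
          lt0 (S.γ a) r ∧ lt0 r a) ∧
      -- FS2
      (∀ a b, lt0 a b → S.typ a = add → S.χ a = s0 → S.χ b = s0 →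
        S.kval a = S.kval b →
        ∃ r, lt0 a r ∧ lt0 r b ∧ S.typ r = rem ∧ S.χ r = s1 ∧
          S.γ r = a) := by
  -- `MonovaryOrder S.ts S.ts` orders events by timestamp, breaking ties by a well-order.
  have hts : ∀ a b, S.ts a < S.ts b → MonovaryOrder S.ts S.ts a b :=
    fun _ _ => Prod.Lex.left _ _
  have hlt : ∀ a b, S.lt a b → MonovaryOrder S.ts S.ts a b :=
    fun a b h => hts a b (LazySys.ts_lt_ts_of_lt hfin h)
  have harrow : ∀ a b, S.arrow a b → MonovaryOrder S.ts S.ts a b :=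
    fun a b h => hts a b (LazySys.ts_lt_ts_of_arrow hfin h)
  exact ⟨MonovaryOrder S.ts S.ts, hlt, irrefl, fun _ _ _ => _root_.trans,
    fun a b hab => (trichotomous a b).imp_right (Or.resolve_left · hab),
    fun _ => LazySys.fs1 hlt harrow, fun _ _ hab => LazySys.fs2 hlt harrow hab⟩
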